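/- Fix t > 0. (i) A vector v ∈ ℝ^{1,4} satisfies ⟨v, N t ε⟩ = 0 for all four sign vectors ε with ε 0 · ε 1 · ε 2 = 1 if and only if v is a scalar multiple of (-t, 0, 0, 0, √2); similarly, ⟨v, P t ε⟩ = 0 for all four sign vectors ε with ε 0 · ε 1 · ε 2 = -1 if and only if v is a scalar multiple of (-1/t, 0, 0, 0, √2). (ii) Consequently, if there exists a nonzero v ∈ ℝ^{1,4} that is Minkowski-orthogonal to all eight of these vectors, then t = 1. (This shows there is no hyperplane preserved by reflection in all eight walls bounding the end E_G except at the start of the deformation, so for t ≠ 1 the corresponding end is not Fuchsian and the convex core boundary is not totally geodesic.) -/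

import Mathlib

/-- The Minkowski inner product on `ℝ^{1,4}`, identified with `Fin 5 → ℝ`. -/
noncomputable def mink (v w : Fin 5 → ℝ) : ℝ :=
  -(v 0 * w 0) + v 1 * w 1 + v 2 * w 2 + v 3 * w 3 + v 4 * w 4

/-- The positive octet space-like vectors of the deformed 24-cell (Table 6.1). -/
noncomputable def Pvec (t : ℝ) (ε : Fin 3 → ℝ) : Fin 5 → ℝ :=
  ![Real.sqrt 2, ε 0, ε 1, ε 2, (ε 0 * ε 1 * ε 2) / t]

/-- The negative octet space-like vectors of the deformed 24-cell (Table 6.1). -/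
noncomputable def Nvec (t : ℝ) (ε : Fin 3 → ℝ) : Fin 5 → ℝ :=
  ![Real.sqrt 2, ε 0, ε 1, ε 2, -((ε 0 * ε 1 * ε 2) * t)]

/-!
On each of the two families of four walls the product `ε 0 * ε 1 * ε 2` is constant, so all
four walls have the same first coordinate `a = √2` and the same last coordinate `b`
(`b = -t` for the even negative walls, `b = -1/t` for the odd positive ones). Their orthogonal
complement is then spanned by `(b, 0, 0, 0, a)`: summing the four orthogonality relations kills
the middle coordinates and gives `a v₀ = b v₄`, and the signed sums isolate `v₁, v₂, v₃`.
A nonzero vector orthogonal to all eight walls is thus a multiple of both `(-t, 0, 0, 0, √2)`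
and `(-1/t, 0, 0, 0, √2)`, which forces `t = 1/t`, i.e. `t = 1`.
-/

def wallVec (a b : ℝ) (ε : Fin 3 → ℝ) : Fin 5 → ℝ :=
  ![a, ε 0, ε 1, ε 2, b]

def IsSignVec (ε : Fin 3 → ℝ) : Prop :=
  ∀ i, ε i = -1 ∨ ε i = 1

lemma IsSignVec.smul {ε : Fin 3 → ℝ} (hε : IsSignVec ε) {σ : ℝ} (hσ : σ = -1 ∨ σ = 1) :
    IsSignVec (σ • ε) := by
  intro i
  rcases hσ with rfl | rfl <;> rcases hε i with h | h <;> simp [h]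

lemma mink_wallVec (v : Fin 5 → ℝ) (a b : ℝ) (ε : Fin 3 → ℝ) :
    mink v (wallVec a b ε) = -(v 0 * a) + v 1 * ε 0 + v 2 * ε 1 + v 3 * ε 2 + v 4 * b := by
  simp [mink, wallVec]

lemma mink_smul_wallVec (a b c : ℝ) (ε : Fin 3 → ℝ) :
    mink (c • ![b, 0, 0, 0, a]) (wallVec a b ε) = 0 := by
  simp only [mink_wallVec, Matrix.smul_cons, smul_eq_mul, mul_zero, Matrix.smul_empty,
    Matrix.cons_val_zero, Matrix.cons_val_one, Matrix.cons_val]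
  ring

lemma Nvec_eq_wallVec {t : ℝ} {ε : Fin 3 → ℝ} (hε : ε 0 * ε 1 * ε 2 = 1) :
    Nvec t ε = wallVec (Real.sqrt 2) (-t) ε := by
  simp [Nvec, wallVec, hε]

lemma Pvec_eq_wallVec {t : ℝ} {ε : Fin 3 → ℝ} (hε : ε 0 * ε 1 * ε 2 = -1) :
    Pvec t ε = wallVec (Real.sqrt 2) (-(1 / t)) ε := by
  simp [Pvec, wallVec, hε, neg_div]

theorem orthogonal_wallVecs_iff {a b σ : ℝ} (ha : a ≠ 0) (hσ : σ = -1 ∨ σ = 1)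
    (v : Fin 5 → ℝ) :
    (∀ ε, IsSignVec ε → ε 0 * ε 1 * ε 2 = σ → mink v (wallVec a b ε) = 0) ↔
      ∃ c : ℝ, v = c • ![b, 0, 0, 0, a] := by
  refine ⟨fun h => ?_, by rintro ⟨c, rfl⟩ ε - -; exact mink_smul_wallVec a b c ε⟩
  have hσσ : σ * σ = 1 := by rcases hσ with rfl | rfl <;> norm_num
  -- the walls with sign product `σ` are those of `σ • ε` with `ε` of sign product `1`
  have even : ∀ ε, IsSignVec ε → ε 0 * ε 1 * ε 2 = 1 →
      -(v 0 * a) + σ * (v 1 * ε 0 + v 2 * ε 1 + v 3 * ε 2) + v 4 * b = 0 := by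
    intro ε hε hprod
    have := h (σ • ε) (hε.smul hσ) (by
      simp only [Pi.smul_apply, smul_eq_mul]
      linear_combination σ ^ 3 * hprod + σ * hσσ)
    simp only [mink_wallVec, Pi.smul_apply, smul_eq_mul] at this
    linear_combination this
  have e₁ := even ![1, 1, 1] (by intro i; fin_cases i <;> simp) (by simp)
  have e₂ := even ![1, -1, -1] (by intro i; fin_cases i <;> simp) (by simp)
  have e₃ := even ![-1, 1, -1] (by intro i; fin_cases i <;> simp) (by simp)
  have e₄ := even ![-1, -1, 1] (by intro i; fin_cases i <;> simp) (by simp)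
  simp only [Matrix.cons_val_zero, Matrix.cons_val_one, Matrix.cons_val, mul_one, mul_neg]
    at e₁ e₂ e₃ e₄
  refine ⟨v 4 / a, funext fun i => ?_⟩
  fin_cases i <;> simp only [Fin.zero_eta, Fin.mk_one, Fin.reduceFinMk, Pi.smul_apply,
    Matrix.cons_val_zero, Matrix.cons_val_one, Matrix.cons_val, smul_eq_mul, mul_zero]
  · field_simp
    linear_combination (-1 / 4 : ℝ) * (e₁ + e₂ + e₃ + e₄)
  · linear_combination (σ / 4) * (e₁ + e₂ - e₃ - e₄) - v 1 * hσσ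
  · linear_combination (σ / 4) * (e₁ - e₂ + e₃ - e₄) - v 2 * hσσ
  · linear_combination (σ / 4) * (e₁ - e₂ - e₃ + e₄) - v 3 * hσσ
  · field_simp

theorem eq_of_eq_smul_of_eq_smul {v : Fin 5 → ℝ} {a b b' c c' : ℝ} (hv : v ≠ 0) (ha : a ≠ 0)
    (h : v = c • ![b, 0, 0, 0, a]) (h' : v = c' • ![b', 0, 0, 0, a]) : b = b' := by
  have h₄ : c * a = c' * a := by simpa using (congrFun h 4).symm.trans (congrFun h' 4)
  obtain rfl : c = c' := mul_right_cancel₀ ha h₄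
  have hc : c ≠ 0 := by rintro rfl; exact hv (by simpa using h)
  exact mul_left_cancel₀ hc (by simpa using (congrFun h 0).symm.trans (congrFun h' 0))

theorem orthogonal_even_Nvecs_iff (t : ℝ) (v : Fin 5 → ℝ) :
    (∀ ε, IsSignVec ε → ε 0 * ε 1 * ε 2 = 1 → mink v (Nvec t ε) = 0) ↔
      ∃ c : ℝ, v = c • ![-t, 0, 0, 0, Real.sqrt 2] := by
  rw [← orthogonal_wallVecs_iff (by positivity) (Or.inr rfl)]
  exact forall_congr' fun ε => forall_congr' fun _ => forall_congr' fun hε => by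
    rw [Nvec_eq_wallVec hε]

theorem orthogonal_odd_Pvecs_iff (t : ℝ) (v : Fin 5 → ℝ) :
    (∀ ε, IsSignVec ε → ε 0 * ε 1 * ε 2 = -1 → mink v (Pvec t ε) = 0) ↔
      ∃ c : ℝ, v = c • ![-(1 / t), 0, 0, 0, Real.sqrt 2] := by
  rw [← orthogonal_wallVecs_iff (by positivity) (Or.inl rfl)]
  exact forall_congr' fun ε => forall_congr' fun _ => forall_congr' fun hε => by
    rw [Pvec_eq_wallVec hε]

theorem no_common_orthogonal_hyperplane (t : ℝ) (ht : 0 < t) :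
    (∀ v : Fin 5 → ℝ,
      ((∀ ε : Fin 3 → ℝ, (∀ i, ε i = -1 ∨ ε i = 1) → ε 0 * ε 1 * ε 2 = 1 →
          mink v (Nvec t ε) = 0) ↔
        ∃ c : ℝ, v = c • (![-t, 0, 0, 0, Real.sqrt 2] : Fin 5 → ℝ)) ∧
      ((∀ ε : Fin 3 → ℝ, (∀ i, ε i = -1 ∨ ε i = 1) → ε 0 * ε 1 * ε 2 = -1 →
          mink v (Pvec t ε) = 0) ↔
        ∃ c : ℝ, v = c • (![-(1 / t), 0, 0, 0, Real.sqrt 2] : Fin 5 → ℝ))) ∧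
    ((∃ v : Fin 5 → ℝ, v ≠ 0 ∧
        ∀ ε : Fin 3 → ℝ, (∀ i, ε i = -1 ∨ ε i = 1) →
          (ε 0 * ε 1 * ε 2 = 1 → mink v (Nvec t ε) = 0) ∧
          (ε 0 * ε 1 * ε 2 = -1 → mink v (Pvec t ε) = 0)) → t = 1) := by
  refine ⟨fun v => ⟨orthogonal_even_Nvecs_iff t v, orthogonal_odd_Pvecs_iff t v⟩, ?_⟩
  rintro ⟨v, hv, h⟩
  obtain ⟨c, hc⟩ := (orthogonal_even_Nvecs_iff t v).1 fun ε hε h₁ => (h ε hε).1 h₁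
  obtain ⟨c', hc'⟩ := (orthogonal_odd_Pvecs_iff t v).1 fun ε hε h₁ => (h ε hε).2 h₁
  have htt : t = 1 / t := neg_inj.1 (eq_of_eq_smul_of_eq_smul hv (by positivity) hc hc')
  have hsq : t * t = 1 := by rw [mul_comm]; nth_rw 1 [htt]; exact one_div_mul_cancel ht.ne'
  exact (mul_self_eq_one_iff.1 hsq).resolve_right (by linarith)
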